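/- If X has a symmetric distribution (X equal in law to −X), then for p in (1/2,1): Δ^Q_p(X) = −2·Q^-_{1-p}(X), Δ^ES_p(X) = −2·ES^-_{1-p}(X), and Δ^ex_p(X) = 2·ex_p(X). -/

import Mathlib

/-!
For every random variable `Y` one has `Q_r(Y) = -Q^-_{1-r}(-Y)`, `ES_p(Y) = -ES^-_{1-p}(-Y)` and
`ex_{1-p}(-Y) = -ex_p(Y)`; when `Y` is symmetric, `-Y` may be replaced by `Y` since these
functionals only depend on the law.

The quantile identity comes from `P(-Y ≤ x) = 1 - P(Y < -x)`, which exhibits `Q_r(Y)` both as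
`inf {x | P(Y ≤ x) > r}` and as `sup {y | P(Y < y) ≤ r}`. The ES identity integrates it, since
left and right quantiles differ at only countably many levels. For expectiles, the identification
function `x ↦ p E[(Y-x)_+] - (1-p) E[(Y-x)_-]` is strictly decreasing, so the infimum of the set
where it is `≤ 0` is also the supremum of the set where it is `≥ 0`, and negating `Y` swaps these.
-/

open MeasureTheory Set

/-- The right-quantile `Q_p(X) = inf {x | P(X ≤ x) > p}`. -/
noncomputable def rightQuantile {Ω : Type*} [MeasurableSpace Ω] (μ : Measure Ω)
    (X : Ω → ℝ) (p : ℝ) : ℝ :=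
  sInf {x : ℝ | p < (μ {ω | X ω ≤ x}).toReal}

/-- The left-quantile `Q^-_p(X) = inf {x | P(X ≤ x) ≥ p}`. -/
noncomputable def leftQuantile {Ω : Type*} [MeasurableSpace Ω] (μ : Measure Ω)
    (X : Ω → ℝ) (p : ℝ) : ℝ :=
  sInf {x : ℝ | p ≤ (μ {ω | X ω ≤ x}).toReal}

/-- The Expected Shortfall `ES_p(X) = (1/(1-p)) ∫_p^1 Q_r(X) dr`. -/
noncomputable def es {Ω : Type*} [MeasurableSpace Ω] (μ : Measure Ω)
    (X : Ω → ℝ) (p : ℝ) : ℝ :=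
  (1 - p)⁻¹ * ∫ r in p..1, rightQuantile μ X r

/-- The left Expected Shortfall `ES^-_p(X) = (1/p) ∫_0^p Q_r(X) dr`. -/
noncomputable def esm {Ω : Type*} [MeasurableSpace Ω] (μ : Measure Ω)
    (X : Ω → ℝ) (p : ℝ) : ℝ :=
  p⁻¹ * ∫ r in (0:ℝ)..p, rightQuantile μ X r

/-- The `p`-expectile of `X`, the unique solution `x` of
`p E[(X-x)_+] = (1-p) E[(X-x)_-]`. -/
noncomputable def expectile {Ω : Type*} [MeasurableSpace Ω] (μ : Measure Ω)
    (X : Ω → ℝ) (p : ℝ) : ℝ :=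
  sInf {x : ℝ | p * ∫ ω, max (X ω - x) 0 ∂μ ≤ (1 - p) * ∫ ω, max (x - X ω) 0 ∂μ}

open Filter Topology ProbabilityTheory

theorem csSup_eq_csInf_of_forall_mem_or_mem {α : Type*} [ConditionallyCompleteLinearOrder α]
    [DenselyOrdered α] {S E : Set α} (hS : S.Nonempty) (hE : E.Nonempty)
    (hcover : ∀ x, x ∈ S ∨ x ∈ E) (hle : ∀ s ∈ S, ∀ e ∈ E, s ≤ e) : sSup S = sInf E := by
  obtain ⟨s₀, hs₀⟩ := hS
  obtain ⟨e₀, he₀⟩ := hE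
  refine (csSup_le ⟨s₀, hs₀⟩ fun s hs => le_csInf ⟨e₀, he₀⟩ (hle s hs)).antisymm
    (not_lt.1 fun hlt => ?_)
  obtain ⟨z, hSz, hzE⟩ := exists_between hlt
  rcases hcover z with hz | hz
  · exact (le_csSup ⟨e₀, fun s hs => hle s hs e₀ he₀⟩ hz).not_gt hSz
  · exact (csInf_le ⟨s₀, fun e he => hle s₀ hs₀ e he⟩ hz).not_gt hzE

section Law

variable {Ω Ω' : Type*} [MeasurableSpace Ω] [MeasurableSpace Ω'] {μ : Measure Ω} {ν : Measure Ω'}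
  {X : Ω → ℝ} {Y : Ω' → ℝ}

lemma measure_setOf_le_congr_map (hX : AEMeasurable X μ) (hY : AEMeasurable Y ν)
    (h : μ.map X = ν.map Y) (x : ℝ) : μ {ω | X ω ≤ x} = ν {ω | Y ω ≤ x} := by
  have := congrArg (· (Iic x)) h
  rwa [Measure.map_apply_of_aemeasurable hX measurableSet_Iic,
    Measure.map_apply_of_aemeasurable hY measurableSet_Iic] at this

lemma leftQuantile_congr_map (hX : AEMeasurable X μ) (hY : AEMeasurable Y ν)
    (h : μ.map X = ν.map Y) : leftQuantile μ X = leftQuantile ν Y := by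
  ext p
  simp only [leftQuantile, measure_setOf_le_congr_map hX hY h]

lemma rightQuantile_congr_map (hX : AEMeasurable X μ) (hY : AEMeasurable Y ν)
    (h : μ.map X = ν.map Y) : rightQuantile μ X = rightQuantile ν Y := by
  ext p
  simp only [rightQuantile, measure_setOf_le_congr_map hX hY h]

lemma esm_congr_map (hX : AEMeasurable X μ) (hY : AEMeasurable Y ν)
    (h : μ.map X = ν.map Y) : esm μ X = esm ν Y := by
  ext p
  rw [esm, esm, rightQuantile_congr_map hX hY h]

lemma expectile_congr_map (hX : AEMeasurable X μ) (hY : AEMeasurable Y ν)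
    (h : μ.map X = ν.map Y) : expectile μ X = expectile ν Y := by
  have key (f : ℝ → ℝ) (hf : Continuous f) : ∫ ω, f (X ω) ∂μ = ∫ ω, f (Y ω) ∂ν := by
    rw [← integral_map hX hf.aestronglyMeasurable, h, integral_map hY hf.aestronglyMeasurable]
  have hpos (x : ℝ) := key (fun y => max (y - x) 0) (by fun_prop)
  have hneg (x : ℝ) := key (fun y => max (x - y) 0) (by fun_prop)
  ext p
  simp only [expectile, hpos, hneg]

end Law

section Quantile

variable {Ω : Type*} [MeasurableSpace Ω] {μ : Measure Ω} [IsProbabilityMeasure μ] {X : Ω → ℝ}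

lemma toReal_measure_setOf_le_eq_cdf (hX : AEMeasurable X μ) (x : ℝ) :
    (μ {ω | X ω ≤ x}).toReal = cdf (μ.map X) x := by
  have := Measure.isProbabilityMeasure_map hX
  rw [cdf_eq_real, map_measureReal_apply_of_aemeasurable hX measurableSet_Iic]
  rfl

lemma exists_lt_toReal_measure_setOf_le (hX : AEMeasurable X μ) {r : ℝ} (hr : r < 1) :
    ∃ x, r < (μ {ω | X ω ≤ x}).toReal := by
  simp only [toReal_measure_setOf_le_eq_cdf hX]
  exact ((tendsto_cdf_atTop _).eventually (eventually_gt_nhds hr)).exists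

lemma exists_toReal_measure_setOf_le_lt (hX : AEMeasurable X μ) {r : ℝ} (hr : 0 < r) :
    ∃ x, (μ {ω | X ω ≤ x}).toReal < r := by
  simp only [toReal_measure_setOf_le_eq_cdf hX]
  exact ((tendsto_cdf_atBot _).eventually (eventually_lt_nhds hr)).exists

lemma toReal_measure_setOf_le_mono {x y : ℝ} (hxy : x ≤ y) :
    (μ {ω | X ω ≤ x}).toReal ≤ (μ {ω | X ω ≤ y}).toReal :=
  measureReal_mono fun _ (h : _ ≤ x) => h.trans hxy

lemma bddBelow_setOf_le_toReal_measure (hX : AEMeasurable X μ) {r : ℝ} (hr : 0 < r) :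
    BddBelow {x | r ≤ (μ {ω | X ω ≤ x}).toReal} := by
  obtain ⟨b, hb⟩ := exists_toReal_measure_setOf_le_lt hX hr
  exact ⟨b, fun x (hx : r ≤ _) =>
    le_of_not_gt fun hxb => (hx.trans (toReal_measure_setOf_le_mono hxb.le)).not_gt hb⟩

lemma leftQuantile_le_rightQuantile (hX : AEMeasurable X μ) {r : ℝ} (hr₀ : 0 < r)
    (hr₁ : r < 1) : leftQuantile μ X r ≤ rightQuantile μ X r :=
  csInf_le_csInf (bddBelow_setOf_le_toReal_measure hX hr₀)
    (exists_lt_toReal_measure_setOf_le hX hr₁) fun _ (hx : r < _) => hx.le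

lemma rightQuantile_le_leftQuantile (hX : AEMeasurable X μ) {s t : ℝ} (hs : 0 < s)
    (hst : s < t) (ht : t < 1) : rightQuantile μ X s ≤ leftQuantile μ X t :=
  csInf_le_csInf
    ((bddBelow_setOf_le_toReal_measure hX hs).mono fun _ (hx : s < _) => hx.le)
    ((exists_lt_toReal_measure_setOf_le hX ht).imp fun _ hx => hx.le)
    fun _ (hx : t ≤ _) => hst.trans_le hx

lemma countable_setOf_leftQuantile_ne_rightQuantile (hX : AEMeasurable X μ) :
    {s | s ∈ Ioo (0 : ℝ) 1 ∧ leftQuantile μ X s ≠ rightQuantile μ X s}.Countable := by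
  set D := {s | s ∈ Ioo (0 : ℝ) 1 ∧ leftQuantile μ X s ≠ rightQuantile μ X s}
  have hlt (s : ℝ) (hs : s ∈ D) : leftQuantile μ X s < rightQuantile μ X s :=
    (leftQuantile_le_rightQuantile hX hs.1.1 hs.1.2).lt_of_ne hs.2
  choose! q hq using fun s hs => exists_rat_btwn (hlt s hs)
  have hq_mono : StrictMonoOn q D := fun s hs t ht hst => by
    have := rightQuantile_le_leftQuantile hX hs.1.1 hst ht.1.2
    exact_mod_cast ((hq s hs).2.trans_le this).trans (hq t ht).1
  exact (mapsTo_univ q D).countable_of_injOn hq_mono.injOn countable_univ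

lemma ae_leftQuantile_eq_rightQuantile (hX : AEMeasurable X μ) :
    ∀ᵐ s, s ∈ Ioo (0 : ℝ) 1 → leftQuantile μ X s = rightQuantile μ X s := by
  filter_upwards [(countable_setOf_leftQuantile_ne_rightQuantile hX).ae_notMem volume]
    with s hs hs01
  exact not_not.1 fun hne => hs ⟨hs01, hne⟩

lemma rightQuantile_eq_neg_leftQuantile_neg (hX : AEMeasurable X μ) {r : ℝ} (hr₀ : 0 < r)
    (hr₁ : r < 1) : rightQuantile μ X r = -leftQuantile μ (-X) (1 - r) := by
  set C := {y | (μ {ω | X ω < y}).toReal ≤ r}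
  have hlt_le (y : ℝ) : (μ {ω | X ω < y}).toReal ≤ (μ {ω | X ω ≤ y}).toReal :=
    measureReal_mono fun _ (h : _ < y) => h.le
  have hneg (x : ℝ) : (μ {ω | (-X) ω ≤ x}).toReal = 1 - (μ {ω | X ω < -x}).toReal := by
    have hcompl : {ω | (-X) ω ≤ x} = {ω | X ω < -x}ᶜ := by ext ω; simp [neg_le]
    rw [hcompl]
    exact probReal_compl_eq_one_sub₀ (hX.nullMeasurable measurableSet_Iio)
  have hleft : leftQuantile μ (-X) (1 - r) = -sSup C := by
    rw [leftQuantile, ← Real.sInf_neg]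
    congr 1
    ext x
    simp only [mem_ofPred_eq, Set.mem_neg, hneg, sub_le_sub_iff_left, C]
  rw [hleft, neg_neg, rightQuantile]
  refine (csSup_eq_csInf_of_forall_mem_or_mem ?_ (exists_lt_toReal_measure_setOf_le hX hr₁)
    (fun x => ?_) fun y hy x hx => ?_).symm
  · obtain ⟨b, hb⟩ := exists_toReal_measure_setOf_le_lt hX hr₀
    exact ⟨b, (hlt_le b).trans hb.le⟩
  · rcases le_or_gt (μ {ω | X ω ≤ x}).toReal r with h | h
    · exact .inl ((hlt_le x).trans h)
    · exact .inr h
  · by_contra! hxy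
    have : (μ {ω | X ω ≤ x}).toReal ≤ (μ {ω | X ω < y}).toReal :=
      measureReal_mono fun _ (h : _ ≤ x) => h.trans_lt hxy
    exact (this.trans hy).not_gt hx

lemma es_eq_neg_esm_neg (hX : AEMeasurable X μ) {p : ℝ} (hp₀ : 0 < p) (hp₁ : p < 1) :
    es μ X p = -esm μ (-X) (1 - p) := by
  have hint : ∫ r in p..1, rightQuantile μ X r
      = -∫ s in (0 : ℝ)..(1 - p), rightQuantile μ (-X) s := by
    calc ∫ r in p..1, rightQuantile μ X r
        = ∫ s in (0 : ℝ)..(1 - p), rightQuantile μ X (1 - s) := by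
          simp [intervalIntegral.integral_comp_sub_left (fun r => rightQuantile μ X r) (1 : ℝ)]
      _ = ∫ s in (0 : ℝ)..(1 - p), -rightQuantile μ (-X) s := by
          refine intervalIntegral.integral_congr_ae ?_
          filter_upwards [ae_leftQuantile_eq_rightQuantile hX.neg] with s hs hsI
          rw [uIoc_of_le (by linarith)] at hsI
          rw [rightQuantile_eq_neg_leftQuantile_neg hX (by linarith [hsI.2]) (by linarith [hsI.1]),
            sub_sub_cancel, hs ⟨hsI.1, by linarith [hsI.2]⟩]
      _ = -∫ s in (0 : ℝ)..(1 - p), rightQuantile μ (-X) s := intervalIntegral.integral_neg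
  rw [es, esm, hint, mul_neg]

end Quantile

section Expectile

variable {Ω : Type*} [MeasurableSpace Ω] {μ : Measure Ω} {X : Ω → ℝ}

noncomputable def expectileIdentification (μ : Measure Ω) (X : Ω → ℝ) (p x : ℝ) : ℝ :=
  p * ∫ ω, max (X ω - x) 0 ∂μ - (1 - p) * ∫ ω, max (x - X ω) 0 ∂μ

lemma expectile_eq_sInf (p : ℝ) :
    expectile μ X p = sInf {x | expectileIdentification μ X p x ≤ 0} := by
  simp only [expectile, expectileIdentification, sub_nonpos]

lemma expectileIdentification_neg (p x : ℝ) :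
    expectileIdentification μ (-X) (1 - p) x = -expectileIdentification μ X p (-x) := by
  simp only [expectileIdentification, Pi.neg_apply, sub_sub_cancel, neg_sub_left, sub_neg_eq_add,
    add_comm x]
  ring

variable [IsProbabilityMeasure μ]

lemma integral_max_sub_sub_integral_max_sub (hX : Integrable X μ) (x : ℝ) :
    ∫ ω, max (X ω - x) 0 ∂μ - ∫ ω, max (x - X ω) 0 ∂μ = ∫ ω, X ω ∂μ - x := by
  have hpos : Integrable (fun ω => max (X ω - x) 0) μ := (hX.sub (integrable_const x)).pos_part
  have hneg : Integrable (fun ω => max (x - X ω) 0) μ := ((integrable_const x).sub hX).pos_part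
  rw [← integral_sub hpos hneg]
  simp_rw [← neg_sub (X _) x, max_zero_sub_max_neg_zero_eq_self]
  rw [integral_sub hX (integrable_const x), integral_const, probReal_univ, one_smul]

lemma strictAnti_expectileIdentification (hX : Integrable X μ) {p : ℝ} (hp₀ : 0 < p)
    (hp₁ : p < 1) : StrictAnti (expectileIdentification μ X p) := by
  intro x y hxy
  have hpos : ∫ ω, max (X ω - y) 0 ∂μ ≤ ∫ ω, max (X ω - x) 0 ∂μ :=
    integral_mono (hX.sub (integrable_const y)).pos_part (hX.sub (integrable_const x)).pos_part
      fun ω => max_le_max (by linarith) le_rfl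
  have hneg : ∫ ω, max (x - X ω) 0 ∂μ ≤ ∫ ω, max (y - X ω) 0 ∂μ :=
    integral_mono ((integrable_const x).sub hX).pos_part ((integrable_const y).sub hX).pos_part
      fun ω => max_le_max (by linarith) le_rfl
  have hx := integral_max_sub_sub_integral_max_sub hX x
  have hy := integral_max_sub_sub_integral_max_sub hX y
  simp only [expectileIdentification]
  rcases le_total p (1 / 2) with hp | hp <;> nlinarith

lemma exists_expectileIdentification_nonpos (hX : Integrable X μ) {p : ℝ} (hp₀ : 0 ≤ p)
    (hp₁ : p < 1) : ∃ x, expectileIdentification μ X p x ≤ 0 := by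
  set A := ∫ ω, |X ω| ∂μ
  -- at `x = A / (1 - p) ≥ 0` both `E[(X - x)_+]` and `E X` are at most `A`
  refine ⟨A / (1 - p), ?_⟩
  have hx : 0 ≤ A / (1 - p) := div_nonneg (integral_nonneg fun _ => abs_nonneg _) (by linarith)
  have hu : ∫ ω, max (X ω - A / (1 - p)) 0 ∂μ ≤ A :=
    integral_mono (hX.sub (integrable_const _)).pos_part hX.abs
      fun ω => max_le (by linarith [le_abs_self (X ω)]) (abs_nonneg _)
  have hu₀ : 0 ≤ ∫ ω, max (X ω - A / (1 - p)) 0 ∂μ := integral_nonneg fun _ => le_max_right _ _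
  have hm : ∫ ω, X ω ∂μ ≤ A := integral_mono hX hX.abs fun ω => le_abs_self _
  have hdiff := integral_max_sub_sub_integral_max_sub hX (A / (1 - p))
  have hA : (1 - p) * (A / (1 - p)) = A := mul_div_cancel₀ _ (by linarith)
  simp only [expectileIdentification]
  nlinarith

lemma exists_expectileIdentification_nonneg (hX : Integrable X μ) {p : ℝ} (hp₀ : 0 < p)
    (hp₁ : p ≤ 1) : ∃ x, 0 ≤ expectileIdentification μ X p x := by
  obtain ⟨x, hx⟩ := exists_expectileIdentification_nonpos hX.neg (p := 1 - p) (by linarith)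
    (by linarith)
  exact ⟨-x, by linarith [expectileIdentification_neg (μ := μ) (X := X) p x]⟩

lemma expectile_neg (hX : Integrable X μ) {p : ℝ} (hp₀ : 0 < p) (hp₁ : p < 1) :
    expectile μ (-X) (1 - p) = -expectile μ X p := by
  have hset : {x | expectileIdentification μ (-X) (1 - p) x ≤ 0}
      = -{y | 0 ≤ expectileIdentification μ X p y} := by
    ext x
    simp only [mem_ofPred_eq, Set.mem_neg, expectileIdentification_neg, neg_nonpos]
  rw [expectile_eq_sInf, expectile_eq_sInf, hset, Real.sInf_neg]
  exact congrArg Neg.neg <| csSup_eq_csInf_of_forall_mem_or_mem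
    (exists_expectileIdentification_nonneg hX hp₀ hp₁.le)
    (exists_expectileIdentification_nonpos hX hp₀.le hp₁)
    (fun x => le_total 0 (expectileIdentification μ X p x))
    fun s (hs : 0 ≤ _) e (he : _ ≤ 0) =>
      (strictAnti_expectileIdentification hX hp₀ hp₁).le_iff_ge.1 (he.trans hs)

end Expectile

theorem symmetric_variability_identities_general {Ω : Type*} [MeasurableSpace Ω]
    (μ : Measure Ω) [IsProbabilityMeasure μ] (X : Ω → ℝ)
    (hX : Integrable X μ)
    (hsym : Measure.map X μ = Measure.map (fun ω => -X ω) μ)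
    (p : ℝ) (hp : p ∈ Ioo (1/2 : ℝ) 1) :
    rightQuantile μ X p - leftQuantile μ X (1 - p) = -2 * leftQuantile μ X (1 - p) ∧
    es μ X p - esm μ X (1 - p) = -2 * esm μ X (1 - p) ∧
    expectile μ X p - expectile μ X (1 - p) = 2 * expectile μ X p := by
  obtain ⟨hp₀, hp₁⟩ : 0 < p ∧ p < 1 := ⟨by linarith [hp.1], hp.2⟩
  have hXm := hX.aemeasurable
  have hlaw : μ.map X = μ.map (-X) := hsym
  have hQ : rightQuantile μ X p = -leftQuantile μ X (1 - p) := by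
    rw [rightQuantile_eq_neg_leftQuantile_neg hXm hp₀ hp₁,
      leftQuantile_congr_map hXm hXm.neg hlaw]
  have hES : es μ X p = -esm μ X (1 - p) := by
    rw [es_eq_neg_esm_neg hXm hp₀ hp₁, esm_congr_map hXm hXm.neg hlaw]
  have hex : expectile μ X (1 - p) = -expectile μ X p :=
    (congrFun (expectile_congr_map hXm hXm.neg hlaw) _).trans (expectile_neg hX hp₀ hp₁)
  exact ⟨by rw [hQ]; ring, by rw [hES]; ring, by rw [hex]; ring⟩

/-- If `X` is symmetrically distributed (`X =_d -X`) then, for `p ∈ (1/2,1)`,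
`Δ^Q_p(X) = -2 Q^-_{1-p}(X)`, `Δ^ES_p(X) = -2 ES^-_{1-p}(X)` and
`Δ^ex_p(X) = 2 ex_p(X)`. -/
theorem symmetric_variability_identities {Ω : Type*} [MeasurableSpace Ω]
    (μ : Measure Ω) [IsProbabilityMeasure μ] (X : Ω → ℝ) (hXm : Measurable X)
    (hX : Integrable X μ)
    (hsym : Measure.map X μ = Measure.map (fun ω => -X ω) μ)
    (p : ℝ) (hp : p ∈ Ioo (1/2 : ℝ) 1) :
    rightQuantile μ X p - leftQuantile μ X (1 - p) = -2 * leftQuantile μ X (1 - p) ∧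
    es μ X p - esm μ X (1 - p) = -2 * esm μ X (1 - p) ∧
    expectile μ X p - expectile μ X (1 - p) = 2 * expectile μ X p :=
  symmetric_variability_identities_general μ X hX hsym p hp
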